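/- arXiv:1902.06849 — 4 statements merged into one kernel-verified Lean document; each statement's English description precedes it below -/
import Mathlib

section
/- There is a constant C > 0 such that for every nonzero integer k, every y ∈ [0,1], and every real number A with |A| ≤ 10, the integral ∫₀¹ G_k(y,z)·|log|z − A|| dz is at most C·log(2 + |k|)/k². -/
noncomputable def greenG (k : ℤ) (y z : ℝ) : ℝ :=
  if y ≤ z then Real.sinh (k * (1 - z)) * Real.sinh (k * y) / (k * Real.sinh k)
  else Real.sinh (k * z) * Real.sinh (k * (1 - y)) / (k * Real.sinh k)

/-! Since `G_{-k} = G_k` we may take `k > 0`; then `0 ≤ G_k ≤ 1/(2k)` and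
`∫₀¹ G_k(y, ·) ≤ 1/k²`. Put `R = (2 + k)³`. Where `|z - A| > R⁻¹` we have
`|log|z - A|| ≤ log R = 3 log(2 + k)`, and the mass of `G_k` gives `3 log(2 + k)/k²`.
On the window `|z - A| ≤ R⁻¹` we use the sup bound of `G_k` instead, and
`∫_{-δ}^{δ} |log|t|| = 2δ(1 - log δ)` gives `(1 + 3 log(2 + k))/(kR) ≤ 4 log(2 + k)/k²`. -/

open Real MeasureTheory intervalIntegral Set

theorem abs_log_le_log_of_inv_le_of_le {R x : ℝ} (hR : 0 < R) (hx : R⁻¹ ≤ x)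
    (hxR : x ≤ R) : |log x| ≤ log R := by
  have hx0 : 0 < x := (inv_pos.2 hR).trans_le hx
  refine abs_le.2 ⟨?_, log_le_log hx0 hxR⟩
  rw [← log_inv]
  exact log_le_log (inv_pos.2 hR) hx

theorem intervalIntegrable_abs_log_abs_sub (A a b : ℝ) :
    IntervalIntegrable (fun z => |log (|z - A|)|) volume a b := by
  simpa only [log_abs, sub_add_cancel] using
    (intervalIntegrable_log' (a := a - A) (b := b - A)).comp_sub_right A |>.abs

theorem integral_abs_log_abs_symm {δ : ℝ} (hδ : |δ| ≤ 1) :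
    ∫ t in -δ..δ, |log (|t|)| = 2 * δ * (1 - log δ) := by
  have hneg : EqOn (fun t => |log (|t|)|) (fun t => -log t) (uIcc (-δ) δ) := by
    intro t ht
    have ht' : |t| ≤ 1 := by
      rcases mem_uIcc.1 ht with ⟨h₁, h₂⟩ | ⟨h₁, h₂⟩ <;>
        exact abs_le.2 ⟨by linarith [abs_le.1 hδ], by linarith [abs_le.1 hδ]⟩
    dsimp only
    rw [← log_abs t, abs_of_nonpos (log_nonpos (abs_nonneg t) ht')]
  rw [integral_congr hneg, intervalIntegral.integral_neg, integral_log, log_neg_eq_log]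
  ring

theorem integral_indicator_abs_log_abs_sub_le (A : ℝ) {δ a b : ℝ} (hδ0 : 0 ≤ δ)
    (hδ1 : δ ≤ 1) (hab : a ≤ b) :
    ∫ z in a..b, (Icc (A - δ) (A + δ)).indicator (fun z => |log (|z - A|)|) z
      ≤ 2 * δ * (1 - log δ) := by
  have hint : IntegrableOn (fun z => |log (|z - A|)|) (Icc (A - δ) (A + δ)) :=
    (intervalIntegrable_iff_integrableOn_Icc_of_le (by linarith)).1
      (intervalIntegrable_abs_log_abs_sub A _ _)
  calc ∫ z in a..b, (Icc (A - δ) (A + δ)).indicator (fun z => |log (|z - A|)|) z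
      ≤ ∫ z, (Icc (A - δ) (A + δ)).indicator (fun z => |log (|z - A|)|) z := by
        rw [intervalIntegral.integral_of_le hab]
        exact setIntegral_le_integral (hint.integrable_indicator measurableSet_Icc)
          (Filter.Eventually.of_forall fun z => indicator_nonneg (fun _ _ => abs_nonneg _) z)
    _ = ∫ z in A - δ..A + δ, |log (|z - A|)| := by
        rw [MeasureTheory.integral_indicator measurableSet_Icc, integral_Icc_eq_integral_Ioc,
          intervalIntegral.integral_of_le (by linarith)]
    _ = 2 * δ * (1 - log δ) := by
        rw [intervalIntegral.integral_comp_sub_right (fun t => |log (|t|)|),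
          add_sub_cancel_left, sub_sub_cancel_left,
          integral_abs_log_abs_symm (abs_le.2 ⟨by linarith, hδ1⟩)]

theorem sinh_mul_sinh_le {a b : ℝ} (h : 0 ≤ a + b) : sinh a * sinh b ≤ sinh (a + b) / 2 := by
  have hcosh : 1 ≤ cosh (a - b) := one_le_cosh _
  have hexp : exp (-(a + b)) ≤ 1 := exp_le_one_iff.2 (by linarith)
  have := cosh_sub_sinh (a + b)
  linarith [cosh_add a b, cosh_sub a b]

theorem integral_sinh_mul {K : ℝ} (hK : K ≠ 0) (a b : ℝ) :
    ∫ z in a..b, sinh (K * z) = (cosh (K * b) - cosh (K * a)) / K := by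
  have hderiv (x : ℝ) : HasDerivAt (fun z => cosh (K * z) / K) (sinh (K * x)) x := by
    simpa [hK] using (((hasDerivAt_id x).const_mul K).cosh).div_const K
  have hcont : Continuous fun z => sinh (K * z) := by fun_prop
  rw [integral_eq_sub_of_hasDerivAt (fun x _ => hderiv x) (hcont.intervalIntegrable a b)]
  ring

theorem greenG_neg (k : ℤ) : greenG (-k) = greenG k := by
  ext y z
  simp only [greenG, Int.cast_neg, neg_mul, sinh_neg]
  split_ifs <;> ring

theorem greenG_abs (k : ℤ) : greenG |k| = greenG k := by
  rcases abs_choice k with h | h <;> rw [h]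
  exact greenG_neg k

theorem continuous_greenG (k : ℤ) (y : ℝ) : Continuous (greenG k y) := by
  refine Continuous.if_le (by fun_prop) (by fun_prop) continuous_const continuous_id ?_
  rintro z rfl
  ring

section PositiveFrequency

variable {k : ℤ} {y z : ℝ}

theorem greenG_nonneg (hk : 0 < k) (hy : y ∈ Icc (0 : ℝ) 1) (hz : z ∈ Icc (0 : ℝ) 1) :
    0 ≤ greenG k y z := by
  have hK : (0 : ℝ) < k := Int.cast_pos.2 hk
  have hsinh {x : ℝ} (hx : 0 ≤ x) : 0 ≤ sinh (k * x) := sinh_nonneg_iff.2 (by positivity)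
  have hden : 0 ≤ (k : ℝ) * sinh k := by positivity
  obtain ⟨hy0, hy1⟩ := hy
  obtain ⟨hz0, hz1⟩ := hz
  unfold greenG
  split_ifs
  · exact div_nonneg (mul_nonneg (hsinh (by linarith)) (hsinh hy0)) hden
  · exact div_nonneg (mul_nonneg (hsinh hz0) (hsinh (by linarith))) hden

theorem greenG_le (hk : 0 < k) (hy : y ∈ Icc (0 : ℝ) 1) (hz : z ∈ Icc (0 : ℝ) 1) :
    greenG k y z ≤ 1 / (2 * k) := by
  have hK : (0 : ℝ) < k := Int.cast_pos.2 hk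
  have hden : 0 < (k : ℝ) * sinh k := mul_pos hK (sinh_pos_iff.2 hK)
  have key {a b : ℝ} (h₀ : 0 ≤ a + b) (h₁ : a + b ≤ 1) :
      sinh (k * a) * sinh (k * b) / (k * sinh k) ≤ 1 / (2 * k) := by
    rw [div_le_div_iff₀ hden (by positivity)]
    have hsum : sinh (k * a + k * b) ≤ sinh k := sinh_le_sinh.2 (by nlinarith)
    nlinarith [sinh_mul_sinh_le (a := k * a) (b := k * b) (by nlinarith)]
  obtain ⟨hy0, hy1⟩ := hy
  obtain ⟨hz0, hz1⟩ := hz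
  unfold greenG
  split_ifs <;> exact key (by linarith) (by linarith)

-- The right-hand side is the solution `u` of `k² u - u'' = 1`, `u(0) = u(1) = 0`.
theorem integral_greenG (hk : k ≠ 0) (hy : y ∈ Icc (0 : ℝ) 1) :
    ∫ z in (0 : ℝ)..1, greenG k y z
      = (1 - (sinh (k * y) + sinh (k * (1 - y))) / sinh k) / k ^ 2 := by
  have hK : (k : ℝ) ≠ 0 := Int.cast_ne_zero.2 hk
  have hsinh : sinh (k : ℝ) ≠ 0 := sinh_ne_zero.2 hK
  obtain ⟨hy0, hy1⟩ := hy
  have hleft : ∫ z in (0 : ℝ)..y, greenG k y z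
      = (cosh (k * y) - 1) / k * (sinh (k * (1 - y)) / (k * sinh k)) := by
    have heq : EqOn (greenG k y)
        (fun z => sinh (k * z) * (sinh (k * (1 - y)) / (k * sinh k))) (uIcc 0 y) := by
      intro z hz
      rw [uIcc_of_le hy0] at hz
      simp only [greenG]
      split_ifs with h
      · obtain rfl : z = y := le_antisymm hz.2 h
        ring
      · ring
    rw [integral_congr heq, intervalIntegral.integral_mul_const, integral_sinh_mul hK, mul_zero,
      cosh_zero]
  have hright : ∫ z in y..(1 : ℝ), greenG k y z
      = (cosh (k * (1 - y)) - 1) / k * (sinh (k * y) / (k * sinh k)) := by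
    have heq : EqOn (greenG k y)
        (fun z => sinh (k * (1 - z)) * (sinh (k * y) / (k * sinh k))) (uIcc y 1) := by
      intro z hz
      rw [uIcc_of_le hy1] at hz
      simp only [greenG, if_pos hz.1]
      ring
    rw [integral_congr heq, intervalIntegral.integral_mul_const,
      integral_comp_sub_left (fun t => sinh (k * t)), integral_sinh_mul hK, sub_self, mul_zero,
      cosh_zero]
  have hint := (continuous_greenG k y).intervalIntegrable (μ := volume)
  have hsinh_add :
      sinh (k : ℝ) = sinh (k * y) * cosh (k * (1 - y)) + cosh (k * y) * sinh (k * (1 - y)) := by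
    rw [← sinh_add]
    ring_nf
  rw [← integral_add_adjacent_intervals (hint 0 y) (hint y 1), hleft, hright]
  field_simp
  linear_combination -hsinh_add

theorem integral_greenG_le (hk : 0 < k) (hy : y ∈ Icc (0 : ℝ) 1) :
    ∫ z in (0 : ℝ)..1, greenG k y z ≤ 1 / k ^ 2 := by
  have hK : (0 : ℝ) < k := Int.cast_pos.2 hk
  have hsinh {x : ℝ} (hx : 0 ≤ x) : 0 ≤ sinh (k * x) := sinh_nonneg_iff.2 (by positivity)
  rw [integral_greenG hk.ne' hy]
  gcongr
  have := div_nonneg (add_nonneg (hsinh hy.1) (hsinh (sub_nonneg.2 hy.2)))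
    (sinh_pos_iff.2 hK).le
  linarith

theorem greenG_mul_abs_log_le (hk : 0 < k) (hy : y ∈ Icc (0 : ℝ) 1) (hz : z ∈ Icc (0 : ℝ) 1)
    {A R : ℝ} (hR : 1 ≤ R) (hzA : |z - A| ≤ R) :
    greenG k y z * |log (|z - A|)|
      ≤ log R * greenG k y z
        + 1 / (2 * k) * (Icc (A - R⁻¹) (A + R⁻¹)).indicator (fun z => |log (|z - A|)|) z := by
  have hG₀ := greenG_nonneg hk hy hz
  by_cases hnear : z ∈ Icc (A - R⁻¹) (A + R⁻¹)
  · rw [indicator_of_mem hnear]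
    have hGL := mul_le_mul_of_nonneg_right (greenG_le hk hy hz) (abs_nonneg (log (|z - A|)))
    nlinarith [log_nonneg hR]
  · rw [indicator_of_notMem hnear, mul_zero, add_zero, mul_comm]
    have hfar : R⁻¹ ≤ |z - A| := by
      rw [mem_Icc, not_and_or, not_le, not_le] at hnear
      rw [le_abs]
      rcases hnear with h | h
      · right; linarith
      · left; linarith
    exact mul_le_mul_of_nonneg_right (abs_log_le_log_of_inv_le_of_le (by linarith) hfar hzA) hG₀

theorem integral_greenG_mul_abs_log_le (hk : 0 < k) (hy : y ∈ Icc (0 : ℝ) 1) {A : ℝ}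
    (hA : |A| ≤ 10) :
    ∫ z in (0 : ℝ)..1, greenG k y z * |log (|z - A|)| ≤ 7 * log (2 + k) / k ^ 2 := by
  have hK : (1 : ℝ) ≤ k := by exact_mod_cast hk
  set M := log (2 + k) with hM_def
  set R : ℝ := (2 + k) ^ 3 with hR_def
  set near := (Icc (A - R⁻¹) (A + R⁻¹)).indicator fun z => |log (|z - A|)|
  have hM : 1 ≤ M := by
    rw [le_log_iff_exp_le (by linarith)]
    linarith [exp_one_lt_d9]
  have hlogR : log R = 3 * M := by rw [hR_def, hM_def, log_pow]; norm_num
  have hR : 27 ≤ R := by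
    have := pow_le_pow_left₀ (by norm_num) (show (3 : ℝ) ≤ 2 + k by linarith) 3
    norm_num at this
    exact this
  have hRk : (k : ℝ) ≤ R := by
    have := le_self_pow₀ (show (1 : ℝ) ≤ 2 + k by linarith) (show 3 ≠ 0 by norm_num)
    linarith
  have hzA (z : ℝ) (hz : z ∈ Icc (0 : ℝ) 1) : |z - A| ≤ R := by
    have : |z| ≤ 1 := abs_le.2 ⟨by linarith [hz.1], hz.2⟩
    linarith [abs_sub z A]
  have hL := intervalIntegrable_abs_log_abs_sub A 0 1
  have hG := (continuous_greenG k y).intervalIntegrable (μ := volume) 0 1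
  have hnear : IntervalIntegrable near volume 0 1 := by
    rw [intervalIntegrable_iff] at hL ⊢
    exact hL.indicator measurableSet_Icc
  have hnear_le : ∫ z in (0 : ℝ)..1, near z ≤ 2 * R⁻¹ * (1 + 3 * M) := by
    have := integral_indicator_abs_log_abs_sub_le A (δ := R⁻¹) (by positivity)
      (inv_le_one_of_one_le₀ (by linarith)) zero_le_one
    rwa [log_inv, hlogR, sub_neg_eq_add] at this
  calc ∫ z in (0 : ℝ)..1, greenG k y z * |log (|z - A|)|
      ≤ ∫ z in (0 : ℝ)..1, log R * greenG k y z + 1 / (2 * k) * near z :=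
        integral_mono_on zero_le_one (hL.continuousOn_mul (continuous_greenG k y).continuousOn)
          ((hG.const_mul _).add (hnear.const_mul _))
          fun z hz => greenG_mul_abs_log_le hk hy hz (by linarith) (hzA z hz)
    _ = log R * (∫ z in (0 : ℝ)..1, greenG k y z)
          + 1 / (2 * k) * ∫ z in (0 : ℝ)..1, near z := by
        rw [integral_add (hG.const_mul _) (hnear.const_mul _),
          intervalIntegral.integral_const_mul, intervalIntegral.integral_const_mul]
    _ ≤ 3 * M * (1 / k ^ 2) + 1 / (2 * k) * (2 * R⁻¹ * (1 + 3 * M)) := by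
        rw [hlogR]
        gcongr
        exact integral_greenG_le hk hy
    _ ≤ 7 * M / k ^ 2 := by
        have hwindow : 1 / (2 * k) * (2 * R⁻¹ * (1 + 3 * M)) ≤ 4 * M / k ^ 2 := by
          rw [show 1 / (2 * k) * (2 * R⁻¹ * (1 + 3 * M)) = (1 + 3 * M) / (k * R) by field_simp]
          apply div_le_div₀ (by positivity) (by linarith) (by positivity)
          nlinarith
        linarith [show 3 * M * (1 / k ^ 2) + 4 * M / k ^ 2 = 7 * M / k ^ 2 by ring]

end PositiveFrequency

theorem greenG_log_integral_bound :
    ∃ C : ℝ, 0 < C ∧ ∀ (k : ℤ), k ≠ 0 → ∀ y ∈ Set.Icc (0:ℝ) 1, ∀ A : ℝ, |A| ≤ 10 →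
      (∫ z in (0:ℝ)..1, greenG k y z * |Real.log (|z - A|)|)
        ≤ C * Real.log (2 + |(k:ℝ)|) / (k:ℝ)^2 := by
  refine ⟨7, by norm_num, fun k hk y hy A hA => ?_⟩
  have h := integral_greenG_mul_abs_log_le (abs_pos.2 hk) hy hA
  rwa [greenG_abs, Int.cast_abs, sq_abs] at h
end

section
/- There exists a constant C > 0 such that for every nonzero integer k, every y ∈ [0,1], and every integer m with 0 ≤ m ≤ 5, ∫₀¹ |∂_z G_k(y,z)|·|log|z − y||^m dz ≤ C·(log(2+|k|))^m / |k|. -/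
/-- The z-derivative of the Green's function of `k² - d²/dy²` on `(0,1)`
with Dirichlet boundary conditions, away from the diagonal. -/
noncomputable def greenGz (k : ℤ) (y z : ℝ) : ℝ :=
  if y < z then -Real.cosh (k * (1 - z)) * Real.sinh (k * y) / Real.sinh k
  else Real.cosh (k * z) * Real.sinh (k * (1 - y)) / Real.sinh k

/-!
Since `sinh a ≥ eᵃ/4` for `a ≥ 1`, `|∂_z G_k(y,z)| ≤ 2 e^{-|k||z-y|}`. With `s = |k||z-y|` one has
`|log |z-y|| = log |k| - log s`, which is at most `log(2+|k|)` when `s ≥ 1` and at most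
`log(2+|k|) (1 - log s)` when `s ≤ 1`; and `(1 - log s)⁵ ≤ 10⁵ s^{-1/2}` because
`log u ≤ u - 1` for `u = s^{-1/10}`. Hence the integrand is at most
`2·10⁵ log(2+|k|)^m s^{-1/2} e^{-s/2}`, and after the substitution `s = |k||z-y|` the integral of
this kernel over all `z ∈ ℝ` is `2 Γ(1/2) √2 / |k|`.
-/

open Real MeasureTheory Set

lemma exp_div_four_le_sinh {a : ℝ} (ha : 1 ≤ a) : exp a / 4 ≤ sinh a := by
  have h2 : 2 ≤ exp a := by linarith [add_one_le_exp a]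
  have hprod : exp (-a) * exp a = 1 := by rw [← exp_add, neg_add_cancel, exp_zero]
  rw [sinh_eq]
  nlinarith [exp_pos (-a)]

lemma cosh_mul_sinh_div_sinh_le {a p q : ℝ} (ha : 1 ≤ a) (hp : 0 ≤ p) (hq : 0 ≤ q) :
    cosh p * sinh q / sinh a ≤ 2 * exp (p + q - a) := by
  have hcosh : cosh p ≤ exp p := by
    rw [cosh_eq]; linarith [exp_le_exp.2 (show -p ≤ p by linarith)]
  have hsinh : sinh q ≤ exp q / 2 := by
    rw [sinh_eq]; linarith [exp_pos (-q)]
  have hsinh_a := exp_div_four_le_sinh ha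
  have hsinh_q : 0 ≤ sinh q := sinh_nonneg_iff.2 hq
  calc cosh p * sinh q / sinh a ≤ exp p * (exp q / 2) / (exp a / 4) := by gcongr
    _ = 2 * exp (p + q - a) := by rw [exp_sub, exp_add]; field_simp; ring

lemma abs_cosh_mul_sinh_div_sinh_le {c p q : ℝ} (hc : 1 ≤ |c|) (hp : 0 ≤ p) (hq : 0 ≤ q) :
    |cosh (c * p) * sinh (c * q) / sinh c| ≤ 2 * exp (|c| * (p + q - 1)) := by
  rw [abs_div, abs_mul, abs_of_pos (cosh_pos _), ← cosh_abs, abs_sinh, abs_sinh, abs_mul,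
    abs_mul, abs_of_nonneg hp, abs_of_nonneg hq]
  refine (cosh_mul_sinh_div_sinh_le hc (by positivity) (by positivity)).trans_eq ?_
  ring_nf

lemma abs_greenGz_le {k : ℤ} (hk : k ≠ 0) {y z : ℝ} (hy : y ∈ Icc 0 1) (hz : z ∈ Icc 0 1) :
    |greenGz k y z| ≤ 2 * exp (-(|(k : ℝ)| * |z - y|)) := by
  have hk1 : 1 ≤ |(k : ℝ)| := by exact_mod_cast Int.one_le_abs hk
  unfold greenGz
  split_ifs with h
  · rw [neg_mul, neg_div, abs_neg, abs_of_pos (sub_pos.2 h)]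
    refine (abs_cosh_mul_sinh_div_sinh_le hk1 (sub_nonneg.2 hz.2) hy.1).trans_eq ?_
    ring_nf
  · rw [abs_sub_comm z y, abs_of_nonneg (by linarith : 0 ≤ y - z)]
    refine (abs_cosh_mul_sinh_div_sinh_le hk1 hz.1 (sub_nonneg.2 hy.2)).trans_eq ?_
    ring_nf

lemma one_sub_log_le_rpow {s : ℝ} (hs : 0 < s) : 1 - log s ≤ 10 * s ^ (-(1 / 10) : ℝ) := by
  have hu : 0 < s ^ (-(1 / 10) : ℝ) := rpow_pos_of_pos hs _
  have := log_le_sub_one_of_pos hu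
  rw [log_rpow hs] at this
  linarith

lemma one_sub_log_pow_le {s : ℝ} (hs : s ∈ Ioc 0 1) {m : ℕ} (hm : m ≤ 5) :
    (1 - log s) ^ m ≤ 10 ^ 5 * s ^ (-(1 / 2) : ℝ) := by
  have hlog : log s ≤ 0 := log_nonpos hs.1.le hs.2
  calc (1 - log s) ^ m ≤ (1 - log s) ^ 5 := pow_le_pow_right₀ (by linarith) hm
    _ ≤ (10 * s ^ (-(1 / 10) : ℝ)) ^ 5 := by
        gcongr
        · linarith
        · exact one_sub_log_le_rpow hs.1
    _ = 10 ^ 5 * s ^ (-(1 / 2) : ℝ) := by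
        rw [mul_pow, ← rpow_natCast (s ^ _) 5, ← rpow_mul hs.1.le]
        norm_num

noncomputable def decayKernel (s : ℝ) : ℝ := s ^ (-(1 / 2) : ℝ) * exp (-(s / 2))

lemma decayKernel_nonneg {s : ℝ} (hs : 0 ≤ s) : 0 ≤ decayKernel s := by
  unfold decayKernel; positivity

lemma exp_neg_le_decayKernel {s : ℝ} (hs : 1 ≤ s) : exp (-s) ≤ decayKernel s := by
  have hhalf : exp (-(s / 2)) ≤ s ^ (-(1 / 2) : ℝ) := by
    calc exp (-(s / 2)) = exp s ^ (-(1 / 2) : ℝ) := by rw [← exp_mul]; ring_nf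
      _ ≤ s ^ (-(1 / 2) : ℝ) :=
        rpow_le_rpow_of_nonpos (by linarith) (by linarith [add_one_le_exp s]) (by norm_num)
  calc exp (-s) = exp (-(s / 2)) * exp (-(s / 2)) := by rw [← exp_add]; ring_nf
    _ ≤ decayKernel s := by unfold decayKernel; gcongr

lemma one_le_log_two_add {a : ℝ} (ha : 1 ≤ a) : 1 ≤ log (2 + a) := by
  rw [le_log_iff_exp_le (by linarith)]
  linarith [exp_one_lt_d9]

lemma abs_log_pow_mul_exp_le {a t : ℝ} (ha : 1 ≤ a) (ht : t ∈ Ioc 0 1) {m : ℕ} (hm : m ≤ 5) :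
    |log t| ^ m * exp (-(a * t)) ≤ 10 ^ 5 * log (2 + a) ^ m * decayKernel (a * t) := by
  set L := log (2 + a)
  set s := a * t
  have hs : 0 < s := mul_pos (by linarith) ht.1
  have hL : 1 ≤ L := one_le_log_two_add ha
  have hloga : log a ≤ L := log_le_log (by linarith) (by linarith)
  have hlogt : |log t| = log a - log s := by
    rw [abs_of_nonpos (log_nonpos ht.1.le ht.2), log_mul (by linarith) ht.1.ne']
    ring
  rcases le_total s 1 with hs1 | hs1
  · have hlog_s : log s ≤ 0 := log_nonpos hs.le hs1
    have hlog_le : |log t| ≤ L * (1 - log s) := by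
      rw [hlogt]; nlinarith [log_nonneg ha]
    calc |log t| ^ m * exp (-s) ≤ (L * (1 - log s)) ^ m * exp (-(s / 2)) :=
          mul_le_mul (pow_le_pow_left₀ (abs_nonneg _) hlog_le m) (exp_le_exp.2 (by linarith))
            (exp_pos _).le (pow_nonneg (by nlinarith) m)
      _ = L ^ m * (1 - log s) ^ m * exp (-(s / 2)) := by rw [mul_pow]
      _ ≤ L ^ m * (10 ^ 5 * s ^ (-(1 / 2) : ℝ)) * exp (-(s / 2)) := by
          gcongr
          exact one_sub_log_pow_le ⟨hs, hs1⟩ hm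
      _ = 10 ^ 5 * L ^ m * decayKernel s := by unfold decayKernel; ring
  · have hlog_le : |log t| ≤ L := by rw [hlogt]; linarith [log_nonneg hs1]
    have hLm : 0 ≤ L ^ m := by positivity
    calc |log t| ^ m * exp (-s) ≤ L ^ m * decayKernel s := by
          gcongr
          exact exp_neg_le_decayKernel hs1
      _ ≤ 10 ^ 5 * L ^ m * decayKernel s := by
          nlinarith [decayKernel_nonneg hs.le]

lemma integral_decayKernel_Ioi : ∫ s in Ioi 0, decayKernel s = √2 * √π := by
  have h := integral_rpow_mul_exp_neg_mul_Ioi (a := 1 / 2) (r := 1 / 2) (by norm_num) (by norm_num)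
  norm_num [Gamma_one_half_eq] at h
  rw [sqrt_eq_rpow 2, ← h]
  refine setIntegral_congr_fun measurableSet_Ioi fun s _ => ?_
  rw [decayKernel]
  ring_nf

-- `integral_comp_abs` holds without integrability, so a nonzero value certifies it.
lemma integrable_decayKernel_abs : Integrable fun x => decayKernel |x| :=
  .of_integral_ne_zero <| by rw [integral_comp_abs, integral_decayKernel_Ioi]; positivity

lemma integrable_decayKernel_mul_abs_sub {a : ℝ} (ha : a ≠ 0) (y : ℝ) :
    Integrable fun z => decayKernel (|a| * |z - y|) := by
  simpa only [abs_mul] using (integrable_decayKernel_abs.comp_mul_left' ha).comp_sub_right y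

lemma integral_decayKernel_mul_abs_sub (a y : ℝ) :
    ∫ z, decayKernel (|a| * |z - y|) = 2 * (√2 * √π) / |a| := by
  rw [integral_sub_right_eq_self (fun z => decayKernel (|a| * |z|)) y]
  simp_rw [← abs_mul]
  rw [Measure.integral_comp_mul_left (fun z => decayKernel |z|), integral_comp_abs,
    integral_decayKernel_Ioi, abs_inv, smul_eq_mul]
  ring

lemma greenGz_mul_abs_log_pow_le {k : ℤ} (hk : k ≠ 0) {y z : ℝ} (hy : y ∈ Icc 0 1)
    (hz : z ∈ Icc 0 1) (hzy : z ≠ y) {m : ℕ} (hm : m ≤ 5) :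
    |greenGz k y z| * |log (|z - y|)| ^ m ≤
      2 * 10 ^ 5 * log (2 + |(k : ℝ)|) ^ m * decayKernel (|(k : ℝ)| * |z - y|) := by
  have hk1 : 1 ≤ |(k : ℝ)| := by exact_mod_cast Int.one_le_abs hk
  have ht : |z - y| ∈ Ioc 0 1 :=
    ⟨abs_pos.2 (sub_ne_zero.2 hzy),
      abs_sub_le_iff.2 ⟨by linarith [hz.2, hy.1], by linarith [hz.1, hy.2]⟩⟩
  calc |greenGz k y z| * |log (|z - y|)| ^ m
      ≤ 2 * (|log (|z - y|)| ^ m * exp (-(|(k : ℝ)| * |z - y|))) := by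
        rw [mul_left_comm, mul_comm (|log _| ^ m)]
        exact mul_le_mul_of_nonneg_right (abs_greenGz_le hk hy hz) (by positivity)
    _ ≤ 2 * (10 ^ 5 * log (2 + |(k : ℝ)|) ^ m * decayKernel (|(k : ℝ)| * |z - y|)) :=
        mul_le_mul_of_nonneg_left (abs_log_pow_mul_exp_le hk1 ht hm) (by norm_num)
    _ = _ := by ring

theorem greenGz_log_integral_bound :
    ∃ C : ℝ, 0 < C ∧ ∀ (k : ℤ), k ≠ 0 → ∀ y ∈ Set.Icc (0:ℝ) 1, ∀ m : ℕ, m ≤ 5 →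
      (∫ z in (0:ℝ)..1, |greenGz k y z| * |Real.log (|z - y|)| ^ m)
        ≤ C * (Real.log (2 + |(k:ℝ)|)) ^ m / |(k:ℝ)| := by
  refine ⟨4 * 10 ^ 5 * (√2 * √π), by positivity, fun k hk y hy m hm => ?_⟩
  have hk0 : (k : ℝ) ≠ 0 := Int.cast_ne_zero.2 hk
  have hL : 0 ≤ log (2 + |(k : ℝ)|) := log_nonneg (by linarith [abs_nonneg (k : ℝ)])
  set c := 2 * 10 ^ 5 * log (2 + |(k : ℝ)|) ^ m
  have hc : 0 ≤ c := by positivity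
  by_cases hF : IntervalIntegrable (fun z => |greenGz k y z| * |log (|z - y|)| ^ m) volume 0 1
  swap
  · rw [intervalIntegral.integral_undef hF]
    exact div_nonneg (mul_nonneg (by positivity) (pow_nonneg hL m)) (abs_nonneg _)
  have hK := (integrable_decayKernel_mul_abs_sub hk0 y).const_mul c
  have hbound : ∀ᵐ z ∂volume.restrict (Icc 0 1),
      |greenGz k y z| * |log (|z - y|)| ^ m ≤ c * decayKernel (|(k : ℝ)| * |z - y|) := by
    filter_upwards [ae_restrict_mem measurableSet_Icc, ae_restrict_of_ae (Measure.ae_ne volume y)]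
      with z hz hzy
    exact greenGz_mul_abs_log_pow_le hk hy hz hzy hm
  calc (∫ z in (0:ℝ)..1, |greenGz k y z| * |log (|z - y|)| ^ m)
      ≤ ∫ z in (0:ℝ)..1, c * decayKernel (|(k : ℝ)| * |z - y|) :=
        intervalIntegral.integral_mono_ae_restrict zero_le_one hF hK.intervalIntegrable hbound
    _ ≤ ∫ z, c * decayKernel (|(k : ℝ)| * |z - y|) := by
        rw [intervalIntegral.integral_of_le zero_le_one]
        exact setIntegral_le_integral hK (ae_of_all _ fun z =>
          mul_nonneg hc (decayKernel_nonneg (by positivity)))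
    _ = 4 * 10 ^ 5 * (√2 * √π) * log (2 + |(k : ℝ)|) ^ m / |(k : ℝ)| := by
        rw [integral_const_mul, integral_decayKernel_mul_abs_sub]
        ring
end

section
/- For every nonzero integer k, every y ∈ [0,1], and every smooth function f on [0,1], the identity ∫₀¹ ∂_y ∂_z G_k(y,z) f(z) dz = f(y) + ∫₀¹ G'_k(y,z) f(z) dz holds, where G'_k(y,z) = −k·cosh(k(1−z))·cosh(ky)/sinh(k) for y < z and G'_k(y,z) = −k·cosh(kz)·cosh(k(1−y))/sinh(k) for y > z. In other words, ∂_y∂_z G_k(y,z) = δ(y−z) + G'_k(y,z) as distributions. -/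
open MeasureTheory intervalIntegral Set

lemma split_ite_integral (t : ℝ) (ht0 : 0 ≤ t) (ht1 : t ≤ 1) (g h : ℝ → ℝ)
    (hg : Continuous g) (hh : Continuous h) :
    (∫ z in (0:ℝ)..1, (if t < z then g z else h z))
      = (∫ z in (0:ℝ)..t, h z) + ∫ z in t..1, g z := by
  have i1 : IntervalIntegrable (fun z => if t < z then g z else h z) volume 0 t := by
    refine (hh.intervalIntegrable 0 t).congr ?_
    intro z hz
    rw [Set.uIoc_of_le ht0] at hz
    simp [not_lt.2 hz.2]
  have i2 : IntervalIntegrable (fun z => if t < z then g z else h z) volume t 1 := by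
    refine (hg.intervalIntegrable t 1).congr ?_
    intro z hz
    rw [Set.uIoc_of_le ht1] at hz
    simp [hz.1]
  rw [← intervalIntegral.integral_add_adjacent_intervals i1 i2]
  congr 1
  · refine intervalIntegral.integral_congr fun z hz => ?_
    rw [Set.uIcc_of_le ht0] at hz
    simp [not_lt.2 hz.2]
  · refine intervalIntegral.integral_congr_ae ?_
    filter_upwards [] with z
    intro hz
    rw [Set.uIoc_of_le ht1] at hz
    simp [hz.1]

/-- The regular part `G'_k` of the mixed derivative `∂_y ∂_z G_k` away from the diagonal. -/
noncomputable def greenG' (k : ℤ) (y z : ℝ) : ℝ :=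
  if y < z then -k * Real.cosh (k * (1 - z)) * Real.cosh (k * y) / Real.sinh k
  else -k * Real.cosh (k * z) * Real.cosh (k * (1 - y)) / Real.sinh k

/-- Distributional identity `∂_y ∂_z G_k(y,z) = δ(y - z) + G'_k(y,z)`, tested against a
smooth function `f`: differentiating in `y` the integral of `∂_z G_k(y,z) f(z)` produces the
diagonal Dirac contribution `f(y)` plus the integral of the regular part `G'_k` against `f`. -/
theorem greenG_mixed_deriv (k : ℤ) (hk : k ≠ 0) (y : ℝ) (hy : y ∈ Set.Ioo (0:ℝ) 1)
    (f : ℝ → ℝ) (hf : ContDiff ℝ (⊤ : ℕ∞) f) :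
    deriv (fun y' => ∫ z in (0:ℝ)..1, greenGz k y' z * f z) y
      = f y + ∫ z in (0:ℝ)..1, greenG' k y z * f z := by
  obtain ⟨hy0, hy1⟩ := hy
  have hkR : (k:ℝ) ≠ 0 := by exact_mod_cast hk
  have hks : Real.sinh k ≠ 0 := fun h => hkR (Real.sinh_eq_zero.mp h)
  have hfc : Continuous f := hf.continuous
  set c : ℝ := Real.sinh k with hc
  have hcont1 : Continuous (fun z : ℝ => Real.cosh (k*z) * f z) := by fun_prop
  have hcont2 : Continuous (fun z : ℝ => -(Real.cosh (k*(1-z)) * f z)) := by fun_prop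
  set A : ℝ → ℝ := fun t => ∫ z in (0:ℝ)..t, Real.cosh (k*z) * f z with hA
  set B : ℝ → ℝ := fun t => ∫ z in (1:ℝ)..t, -(Real.cosh (k*(1-z)) * f z) with hB
  set F : ℝ → ℝ := fun t => Real.sinh (k*(1-t))/c * A t - Real.sinh (k*t)/c * B t with hF
  -- key pointwise identity on (0,1)
  have key : ∀ t ∈ Set.Ioo (0:ℝ) 1,
      (∫ z in (0:ℝ)..1, greenGz k t z * f z) = F t := by
    intro t ht
    have ht0 : (0:ℝ) ≤ t := ht.1.le
    have ht1 : t ≤ 1 := ht.2.le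
    have : (fun z => greenGz k t z * f z)
        = fun z => if t < z then (-Real.cosh (k * (1 - z)) * Real.sinh (k * t) / c) * f z
            else (Real.cosh (k * z) * Real.sinh (k * (1 - t)) / c) * f z := by
      funext z; rw [greenGz, ite_mul]
    rw [this, split_ite_integral t ht0 ht1 _ _ (by fun_prop) (by fun_prop)]
    have e1 : (∫ z in (0:ℝ)..t, (Real.cosh (k * z) * Real.sinh (k * (1 - t)) / c) * f z)
        = Real.sinh (k*(1-t))/c * A t := by
      rw [hA, ← intervalIntegral.integral_const_mul]
      refine intervalIntegral.integral_congr fun z _ => by ring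
    have hBt : -(B t) = ∫ z in t..(1:ℝ), -(Real.cosh (k*(1-z)) * f z) := by
      simp only [hB]
      rw [intervalIntegral.integral_symm t 1, neg_neg]
    have e2 : (∫ z in t..(1:ℝ), (-Real.cosh (k * (1 - z)) * Real.sinh (k * t) / c) * f z)
        = Real.sinh (k*t)/c * -(B t) := by
      rw [hBt, ← intervalIntegral.integral_const_mul]
      refine intervalIntegral.integral_congr fun z _ => by ring
    rw [e1, e2]
    show _ = Real.sinh (k*(1-t))/c * A t - Real.sinh (k*t)/c * B t
    ring
  -- eventual equality near y
  have hev : (fun y' => ∫ z in (0:ℝ)..1, greenGz k y' z * f z) =ᶠ[nhds y] F := by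
    filter_upwards [Ioo_mem_nhds hy0 hy1] with t ht using key t ht
  rw [hev.deriv_eq]
  -- derivatives of A and B
  have hAint : IntervalIntegrable (fun z : ℝ => Real.cosh (k*z) * f z) volume 0 y :=
    hcont1.intervalIntegrable 0 y
  have hBint : IntervalIntegrable (fun z : ℝ => -(Real.cosh (k*(1-z)) * f z)) volume 1 y :=
    hcont2.intervalIntegrable 1 y
  have hA' : HasDerivAt A (Real.cosh (k*y) * f y) y :=
    intervalIntegral.integral_hasDerivAt_right hAint
      (hcont1.stronglyMeasurableAtFilter _ _) hcont1.continuousAt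
  have hB' : HasDerivAt B (-(Real.cosh (k*(1-y)) * f y)) y :=
    intervalIntegral.integral_hasDerivAt_right hBint
      (hcont2.stronglyMeasurableAtFilter _ _) hcont2.continuousAt
  -- derivatives of the sinh factors
  have hin1 : HasDerivAt (fun t : ℝ => (k:ℝ)*(1-t)) (-(k:ℝ)) y := by
    simpa using ((hasDerivAt_id y).const_sub (1:ℝ)).const_mul (k:ℝ)
  have hs1 : HasDerivAt (fun t : ℝ => Real.sinh (k*(1-t))) (-(k:ℝ) * Real.cosh (k*(1-y))) y := by
    have := (Real.hasDerivAt_sinh ((k:ℝ)*(1-y))).comp y hin1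
    refine this.congr_deriv ?_
    ring
  have hin2 : HasDerivAt (fun t : ℝ => (k:ℝ)*t) ((k:ℝ)) y := by
    simpa using (hasDerivAt_id y).const_mul (k:ℝ)
  have hs2 : HasDerivAt (fun t : ℝ => Real.sinh (k*t)) ((k:ℝ) * Real.cosh (k*y)) y := by
    have := (Real.hasDerivAt_sinh ((k:ℝ)*y)).comp y hin2
    refine this.congr_deriv ?_
    ring
  have hFd : HasDerivAt F
      ((-(k:ℝ) * Real.cosh (k*(1-y)) / c) * A y + Real.sinh (k*(1-y))/c * (Real.cosh (k*y) * f y)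
        - ((k:ℝ) * Real.cosh (k*y) / c * B y + Real.sinh (k*y)/c * (-(Real.cosh (k*(1-y)) * f y)))) y := by
    exact ((hs1.div_const c).mul hA').sub ((hs2.div_const c).mul hB')
  rw [hFd.deriv]
  -- now compute the RHS integral
  have hG' : (fun z => greenG' k y z * f z)
      = fun z => if y < z then (-(k:ℝ) * Real.cosh (k * (1 - z)) * Real.cosh (k * y) / c) * f z
          else (-(k:ℝ) * Real.cosh (k * z) * Real.cosh (k * (1 - y)) / c) * f z := by
    funext z; rw [greenG', ite_mul]
  have e1 : (∫ z in (0:ℝ)..y, (-(k:ℝ) * Real.cosh (k * z) * Real.cosh (k * (1 - y)) / c) * f z)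
      = (-(k:ℝ) * Real.cosh (k*(1-y)) / c) * A y := by
    rw [hA, ← intervalIntegral.integral_const_mul]
    refine intervalIntegral.integral_congr fun z _ => by ring
  have hBy : -(B y) = ∫ z in y..(1:ℝ), -(Real.cosh (k*(1-z)) * f z) := by
    simp only [hB]
    rw [intervalIntegral.integral_symm y 1, neg_neg]
  have e2 : (∫ z in y..(1:ℝ), (-(k:ℝ) * Real.cosh (k * (1 - z)) * Real.cosh (k * y) / c) * f z)
      = (k:ℝ) * Real.cosh (k*y) / c * -(B y) := by
    rw [hBy, ← intervalIntegral.integral_const_mul]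
    refine intervalIntegral.integral_congr fun z _ => by ring
  rw [hG', split_ite_integral y hy0.le hy1.le _ _ (by fun_prop) (by fun_prop), e1, e2]
  -- final algebra, using sinh addition formula
  have hsum : Real.sinh (k*(1-y)) * Real.cosh (k*y) + Real.cosh (k*(1-y)) * Real.sinh (k*y) = c := by
    rw [hc, ← Real.sinh_add, show (k:ℝ)*(1-y) + k*y = k by ring]
  have hf1 : Real.sinh (k*(1-y))/c * (Real.cosh (k*y) * f y)
      + Real.sinh (k*y)/c * (Real.cosh (k*(1-y)) * f y) = f y := by
    rw [div_mul_eq_mul_div, div_mul_eq_mul_div, ← add_div,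
      show Real.sinh ((k:ℝ)*(1-y)) * (Real.cosh ((k:ℝ)*y) * f y)
          + Real.sinh ((k:ℝ)*y) * (Real.cosh ((k:ℝ)*(1-y)) * f y)
        = (Real.sinh ((k:ℝ)*(1-y)) * Real.cosh ((k:ℝ)*y)
          + Real.cosh ((k:ℝ)*(1-y)) * Real.sinh ((k:ℝ)*y)) * f y from by ring, hsum]
    exact mul_div_cancel_left₀ _ hks
  linear_combination hf1
end

section
/- Let b ∈ C¹([0,1]) with ϑ/100 ≤ |b'| ≤ 100/ϑ on [0,1]. There exists a constant C depending only on ϑ such that for all y₀ ∈ [0,1] and all ε ∈ (0,1/4], ∫₀¹ |log(b(z) − b(y₀) + iε)|^m dz ≤ C^m · m! for every integer m ≥ 1. -/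
open Complex

/-!
By the mean value theorem `|b z - b y₀|` is comparable to `d = |z - y₀|`, so the modulus of
`b z - b y₀ + iε` lies between `(ϑ/100) d` and `100/ϑ + 1`; with the argument contributing at
most `π`, this gives `‖log (b z - b y₀ + iε)‖ ≤ A + |log d|` with
`A = π + |log (ϑ/100)| + |log (100/ϑ + 1)|`. The factorial comes from
`s ^ m ≤ 2 ^ m m! e^(s/2)`, which turns `(A + |log d|) ^ m` into `2 ^ m m! e^(A/2) d^(-1/2)`,
and `∫₀¹ |z - y₀|^(-1/2) dz ≤ 4`.
-/

open Set MeasureTheory intervalIntegral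
open scoped Nat

theorem pow_le_two_pow_mul_factorial_mul_exp_half {s : ℝ} (hs : 0 ≤ s) (m : ℕ) :
    s ^ m ≤ 2 ^ m * m ! * Real.exp (s / 2) := by
  have h := Real.pow_div_factorial_le_exp (s / 2) (by positivity) m
  rw [div_le_iff₀ (by positivity), div_pow] at h
  calc s ^ m = 2 ^ m * (s ^ m / 2 ^ m) := by field_simp
    _ ≤ 2 ^ m * m ! * Real.exp (s / 2) := by rw [mul_assoc, mul_comm (m ! : ℝ)]; gcongr

theorem add_abs_log_pow_le_mul_rpow_neg_half {A d : ℝ} (hA : 0 ≤ A) (hd₀ : 0 < d) (hd₁ : d ≤ 1)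
    (m : ℕ) :
    (A + |Real.log d|) ^ m ≤ 2 ^ m * m ! * Real.exp (A / 2) * d ^ (-(1 / 2) : ℝ) := by
  have hexp : Real.exp ((A + |Real.log d|) / 2) = Real.exp (A / 2) * d ^ (-(1 / 2) : ℝ) := by
    rw [abs_of_nonpos (Real.log_nonpos hd₀.le hd₁), Real.rpow_def_of_pos hd₀, ← Real.exp_add]
    ring_nf
  calc (A + |Real.log d|) ^ m ≤ 2 ^ m * m ! * Real.exp ((A + |Real.log d|) / 2) :=
        pow_le_two_pow_mul_factorial_mul_exp_half (by positivity) m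
    _ = 2 ^ m * m ! * Real.exp (A / 2) * d ^ (-(1 / 2) : ℝ) := by rw [hexp]; ring

theorem exists_abs_sub_eq_abs_deriv_mul {f : ℝ → ℝ} {a b x y : ℝ}
    (hf : ContinuousOn f (Icc a b)) (hf' : DifferentiableOn ℝ f (Ioo a b))
    (hx : x ∈ Icc a b) (hy : y ∈ Icc a b) :
    ∃ c ∈ Icc a b, |f x - f y| = |deriv f c| * |x - y| := by
  wlog hxy : x ≤ y generalizing x y
  · obtain ⟨c, hc, h⟩ := this hy hx (le_of_not_ge hxy)
    exact ⟨c, hc, by rw [abs_sub_comm, h, abs_sub_comm]⟩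
  rcases hxy.eq_or_lt with rfl | hlt
  · exact ⟨x, hx, by simp⟩
  obtain ⟨c, hc, hslope⟩ := exists_deriv_eq_slope f hlt (hf.mono (Icc_subset_Icc hx.1 hy.2))
    (hf'.mono (Ioo_subset_Ioo hx.1 hy.2))
  refine ⟨c, Ioo_subset_Icc_self (Ioo_subset_Ioo hx.1 hy.2 hc), ?_⟩
  rw [hslope, abs_sub_comm x, abs_div, abs_sub_comm (f x), div_mul_cancel₀]
  exact abs_ne_zero.mpr (sub_ne_zero.mpr hlt.ne')

theorem Complex.norm_log_le_abs_log_norm_add_pi (w : ℂ) :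
    ‖Complex.log w‖ ≤ |Real.log ‖w‖| + Real.pi := by
  calc ‖Complex.log w‖ ≤ |(Complex.log w).re| + |(Complex.log w).im| :=
        norm_le_abs_re_add_abs_im _
    _ ≤ |Real.log ‖w‖| + Real.pi := by
        rw [log_re, log_im]; exact add_le_add_right (abs_arg_le_pi w) _

theorem Real.abs_log_le_abs_log_add_abs_log {x lo hi : ℝ} (hlo : 0 < lo) (h₁ : lo ≤ x)
    (h₂ : x ≤ hi) : |Real.log x| ≤ |Real.log lo| + |Real.log hi| := by
  have h₁' := Real.log_le_log hlo h₁
  have h₂' := Real.log_le_log (hlo.trans_le h₁) h₂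
  rw [abs_le]
  constructor <;> linarith [neg_abs_le (Real.log lo), le_abs_self (Real.log hi),
    abs_nonneg (Real.log lo), abs_nonneg (Real.log hi)]

theorem norm_log_ofReal_add_mul_I_le {u ε ℓ L d : ℝ} (hℓ : 0 < ℓ) (hd : 0 < d)
    (hlo : ℓ * d ≤ |u|) (hhi : |u| + |ε| ≤ L) :
    ‖Complex.log (u + ε * I)‖ ≤ Real.pi + |Real.log ℓ| + |Real.log L| + |Real.log d| := by
  have hre : ((u : ℂ) + ε * I).re = u := by simp
  have him : ((u : ℂ) + ε * I).im = ε := by simp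
  have hnorm : ‖(u : ℂ) + ε * I‖ ≤ L :=
    (norm_le_abs_re_add_abs_im _).trans (by rwa [hre, him])
  have hlow : |u| ≤ ‖(u : ℂ) + ε * I‖ := by
    simpa only [hre] using abs_re_le_norm ((u : ℂ) + ε * I)
  have hlog := Real.abs_log_le_abs_log_add_abs_log (by positivity) (hlo.trans hlow) hnorm
  rw [Real.log_mul hℓ.ne' hd.ne'] at hlog
  linarith [Complex.norm_log_le_abs_log_norm_add_pi ((u : ℂ) + ε * I),
    abs_add_le (Real.log ℓ) (Real.log d)]

theorem norm_log_ofReal_sub_add_mul_I_pow_le {b : ℝ → ℝ} {ℓ L ε y₀ z : ℝ}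
    (hb : ContDiffOn ℝ 1 b (Icc 0 1)) (hℓ : 0 < ℓ)
    (hder : ∀ y ∈ Icc (0 : ℝ) 1, ℓ ≤ |deriv b y| ∧ |deriv b y| ≤ L) (hε : |ε| ≤ 1)
    (hz : z ∈ Icc (0 : ℝ) 1) (hy₀ : y₀ ∈ Icc (0 : ℝ) 1) (hzy : z ≠ y₀) (m : ℕ) :
    ‖Complex.log ((b z : ℂ) - (b y₀ : ℂ) + ε * I)‖ ^ m ≤
      2 ^ m * m ! * Real.exp ((Real.pi + |Real.log ℓ| + |Real.log (L + 1)|) / 2) *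
        |z - y₀| ^ (-(1 / 2) : ℝ) := by
  have hd₀ : 0 < |z - y₀| := abs_pos.mpr (sub_ne_zero.mpr hzy)
  have hd₁ : |z - y₀| ≤ 1 := abs_sub_le_of_nonneg_of_le hz.1 hz.2 hy₀.1 hy₀.2
  obtain ⟨c, hc, hbc⟩ := exists_abs_sub_eq_abs_deriv_mul hb.continuousOn
    ((hb.differentiableOn one_ne_zero).mono Ioo_subset_Icc_self) hz hy₀
  obtain ⟨hℓc, hLc⟩ := hder c hc
  have hlo : ℓ * |z - y₀| ≤ |b z - b y₀| := hbc ▸ by gcongr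
  have hhi : |b z - b y₀| + |ε| ≤ L + 1 := by
    have : |b z - b y₀| ≤ L := hbc ▸ (mul_le_of_le_one_right (abs_nonneg _) hd₁).trans hLc
    linarith
  have hlog := norm_log_ofReal_add_mul_I_le hℓ hd₀ hlo hhi
  push_cast at hlog
  calc ‖Complex.log ((b z : ℂ) - (b y₀ : ℂ) + ε * I)‖ ^ m
      ≤ (Real.pi + |Real.log ℓ| + |Real.log (L + 1)| + |Real.log (|z - y₀|)|) ^ m :=
        pow_le_pow_left₀ (norm_nonneg _) hlog m
    _ ≤ _ := add_abs_log_pow_le_mul_rpow_neg_half (by positivity) hd₀ hd₁ m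

theorem intervalIntegrable_abs_rpow {r : ℝ} (hr : -1 < r) (a b : ℝ) :
    IntervalIntegrable (fun x => |x| ^ r) volume a b := by
  suffices h : ∀ c : ℝ, IntervalIntegrable (fun x => |x| ^ r) volume 0 c from
    (h a).symm.trans (h b)
  intro c
  rcases le_total 0 c with hc | hc
  · refine (intervalIntegrable_rpow' hr).congr fun x hx => ?_
    rw [uIoc_of_le hc] at hx
    simp only [abs_of_pos hx.1]
  · have h := (intervalIntegrable_rpow' hr (a := 0) (b := -c)).comp_sub_left 0
    simp only [zero_sub, sub_zero, neg_neg] at h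
    refine h.congr fun x hx => ?_
    rw [uIoc_of_ge hc] at hx
    simp only [abs_of_nonpos hx.2]

theorem integral_abs_rpow {r : ℝ} (hr : -1 < r) {a b : ℝ} (ha : a ≤ 0) (hb : 0 ≤ b) :
    ∫ x in a..b, |x| ^ r = ((-a) ^ (r + 1) + b ^ (r + 1)) / (r + 1) := by
  have hr' : r + 1 ≠ 0 := by linarith
  rw [← integral_add_adjacent_intervals (intervalIntegrable_abs_rpow hr a 0)
    (intervalIntegrable_abs_rpow hr 0 b)]
  have hneg : ∫ x in a..0, |x| ^ r = ∫ x in a..0, (-x) ^ r :=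
    integral_congr fun x hx => by rw [uIcc_of_le ha] at hx; simp only [abs_of_nonpos hx.2]
  have hpos : ∫ x in (0 : ℝ)..b, |x| ^ r = ∫ x in (0 : ℝ)..b, x ^ r :=
    integral_congr fun x hx => by rw [uIcc_of_le hb] at hx; simp only [abs_of_nonneg hx.1]
  rw [hneg, hpos, integral_comp_neg (fun x => x ^ r), neg_zero, integral_rpow (Or.inl hr),
    integral_rpow (Or.inl hr), Real.zero_rpow hr']
  ring

theorem intervalIntegrable_abs_sub_rpow {r : ℝ} (hr : -1 < r) (a b c : ℝ) :
    IntervalIntegrable (fun x => |x - c| ^ r) volume a b := by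
  simpa using (intervalIntegrable_abs_rpow hr (a - c) (b - c)).comp_sub_right c

theorem integral_abs_sub_rpow {r : ℝ} (hr : -1 < r) {a b c : ℝ} (hc : c ∈ Icc a b) :
    ∫ x in a..b, |x - c| ^ r = ((c - a) ^ (r + 1) + (b - c) ^ (r + 1)) / (r + 1) := by
  rw [integral_comp_sub_right (fun x => |x| ^ r),
    integral_abs_rpow hr (sub_nonpos.mpr hc.1) (sub_nonneg.mpr hc.2), neg_sub]

theorem integral_abs_sub_rpow_neg_half_le_four {y₀ : ℝ} (hy₀ : y₀ ∈ Icc (0 : ℝ) 1) :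
    ∫ z in (0 : ℝ)..1, |z - y₀| ^ (-(1 / 2) : ℝ) ≤ 4 := by
  rw [integral_abs_sub_rpow (by norm_num) hy₀]
  have h₁ : (y₀ - 0) ^ (-(1 / 2) + 1 : ℝ) ≤ 1 :=
    Real.rpow_le_one (by linarith [hy₀.1]) (by linarith [hy₀.2]) (by norm_num)
  have h₂ : (1 - y₀) ^ (-(1 / 2) + 1 : ℝ) ≤ 1 :=
    Real.rpow_le_one (by linarith [hy₀.2]) (by linarith [hy₀.1]) (by norm_num)
  rw [div_le_iff₀ (by norm_num)]
  linarith

theorem intervalIntegral.integral_mono_of_nonneg_ae {μ : Measure ℝ} {f g : ℝ → ℝ} {a b : ℝ}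
    (hab : a ≤ b) (hf : 0 ≤ᵐ[μ.restrict (Ioc a b)] f) (hg : IntervalIntegrable g μ a b)
    (hfg : f ≤ᵐ[μ.restrict (Ioc a b)] g) :
    ∫ x in a..b, f x ∂μ ≤ ∫ x in a..b, g x ∂μ := by
  rw [integral_of_le hab, integral_of_le hab]
  exact integral_mono_of_nonneg hf hg.1 hfg

theorem two_pow_mul_factorial_mul_mul_four_le {E : ℝ} (hE : 1 ≤ E) {m : ℕ} (hm : 1 ≤ m) :
    2 ^ m * m ! * E * 4 ≤ (8 * E) ^ m * m ! := by
  have h₄ : (4 : ℝ) ≤ 4 ^ m := le_self_pow₀ (by norm_num) (by omega)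
  have hEm : E ≤ E ^ m := le_self_pow₀ hE (by omega)
  calc 2 ^ m * m ! * E * 4 ≤ 2 ^ m * m ! * E ^ m * 4 ^ m := by gcongr
    _ = (8 * E) ^ m * m ! := by
      rw [show (8 : ℝ) = 2 * 4 by norm_num, mul_pow, mul_pow]; ring

theorem log_moment_bound (ϑ : ℝ) (hϑ : ϑ ∈ Set.Ioo (0:ℝ) (1/10)) :
    ∃ C : ℝ, 0 < C ∧
      ∀ (b : ℝ → ℝ), ContDiffOn ℝ 1 b (Set.Icc 0 1) →
        (∀ y ∈ Set.Icc (0:ℝ) 1, ϑ/100 ≤ |deriv b y| ∧ |deriv b y| ≤ 100/ϑ) →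
      ∀ y₀ ∈ Set.Icc (0:ℝ) 1, ∀ ε ∈ Set.Ioc (0:ℝ) (1/4), ∀ m : ℕ, 1 ≤ m →
        (∫ z in (0:ℝ)..1, ‖Complex.log ((b z : ℂ) - (b y₀ : ℂ) + ε * I)‖ ^ m)
          ≤ C ^ m * (Nat.factorial m : ℝ) := by
  have hϑ₀ : 0 < ϑ := hϑ.1
  set A := Real.pi + |Real.log (ϑ / 100)| + |Real.log (100 / ϑ + 1)|
  refine ⟨8 * Real.exp (A / 2), by positivity, ?_⟩
  intro b hb hder y₀ hy₀ ε hε m hm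
  set K := 2 ^ m * (m ! : ℝ) * Real.exp (A / 2)
  have hε₁ : |ε| ≤ 1 := by rw [abs_of_pos hε.1]; linarith [hε.2]
  have hae : ∀ᵐ z ∂volume.restrict (Ioc (0 : ℝ) 1),
      ‖Complex.log ((b z : ℂ) - (b y₀ : ℂ) + ε * I)‖ ^ m ≤ K * |z - y₀| ^ (-(1 / 2) : ℝ) := by
    -- at `z = y₀` the majorant is `0 ^ (-1/2) = 0`, so the bound only holds almost everywhere
    filter_upwards [ae_restrict_mem measurableSet_Ioc,
      ae_restrict_of_ae (measure_eq_zero_iff_ae_notMem.mp (measure_singleton y₀))] with z hz hzy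
    exact norm_log_ofReal_sub_add_mul_I_pow_le hb (by positivity) hder hε₁
      (Ioc_subset_Icc_self hz) hy₀ hzy m
  calc ∫ z in (0 : ℝ)..1, ‖Complex.log ((b z : ℂ) - (b y₀ : ℂ) + ε * I)‖ ^ m
      ≤ ∫ z in (0 : ℝ)..1, K * |z - y₀| ^ (-(1 / 2) : ℝ) :=
        integral_mono_of_nonneg_ae zero_le_one (ae_of_all _ fun _ => by positivity)
          ((intervalIntegrable_abs_sub_rpow (by norm_num) 0 1 y₀).const_mul K) hae
    _ = K * ∫ z in (0 : ℝ)..1, |z - y₀| ^ (-(1 / 2) : ℝ) := integral_const_mul K _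
    _ ≤ K * 4 := by gcongr; exact integral_abs_sub_rpow_neg_half_le_four hy₀
    _ ≤ (8 * Real.exp (A / 2)) ^ m * m ! :=
        two_pow_mul_factorial_mul_mul_four_le (Real.one_le_exp (by positivity)) hm
end
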